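/- Let A be a finite-dimensional unital algebra over a field F with char(F) ≠ 2 and char(F) ≠ 3. If a linear map T : A → A satisfies T(1) = 1 and T(x)³ − x³ ∈ [A,A] for every x ∈ A, then T(x²) − T(x)² ∈ rad(A) for every x ∈ A. -/

import Mathlib

/-!
Polarizing `T x ^ 3 ≡ x ^ 3` modulo `[A, A]` (with `2`, `3` invertible and `T 1 = 1`) gives
`T x * T y ≡ x * y` and `T y * T y * T x ≡ y * y * x`, hence `(T (x ^ 2) - T x ^ 2) * T a ≡ 0`
for every `a`.

For a maximal two-sided ideal `M` the subspace `M + [A, A]` is proper: with `K` an algebraic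
closure of `F`, the trace on a simple module over `K ⊗ (A ⧸ M)` kills commutators, yet by Schur's
lemma and Jacobson density it is not identically zero. So `M` is the largest two-sided ideal inside `M + [A, A]`,
i.e. `a ∈ M` iff `a * A ⊆ M + [A, A]`. This shows first that `T a ∈ M` forces `a ∈ M`, so that
`T` is onto modulo `M` by counting dimensions, and then that `T (x ^ 2) - T x ^ 2 ∈ M`.
-/

/-- The radical of a finite-dimensional algebra, realized as the intersection of all
maximal two-sided ideals. -/
noncomputable def ringRad (A : Type*) [Ring A] : TwoSidedIdeal A :=
  sInf {M : TwoSidedIdeal A | IsCoatom M}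

open TensorProduct

abbrev commutatorSpan (F A : Type*) [Field F] [Ring A] [Algebra F A] : Submodule F A :=
  Submodule.span F {z : A | ∃ u v : A, z = u * v - v * u}

section

variable {F A B : Type*} [Field F] [Ring A] [Algebra F A] [Ring B] [Algebra F B]

lemma commutator_mem_commutatorSpan (u v : A) : u * v - v * u ∈ commutatorSpan F A :=
  Submodule.subset_span ⟨u, v, rfl⟩

lemma commutatorSpan_le_ker {M : Type*} [AddCommGroup M] [Module F M] (f : A →ₗ[F] M)
    (hf : ∀ u v, f (u * v) = f (v * u)) : commutatorSpan F A ≤ LinearMap.ker f :=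
  Submodule.span_le.mpr <| by
    rintro _ ⟨u, v, rfl⟩
    simp [hf]

lemma map_commutatorSpan_le (f : A →ₐ[F] B) :
    (commutatorSpan F A).map f.toLinearMap ≤ commutatorSpan F B := by
  rw [Submodule.map_span_le]
  rintro _ ⟨u, v, rfl⟩
  simpa using commutator_mem_commutatorSpan (f u) (f v)

lemma commutatorSpan_le_restrictScalars (K : Type*) [Field K] [Algebra F K] [Algebra K A]
    [IsScalarTower F K A] : commutatorSpan F A ≤ (commutatorSpan K A).restrictScalars F :=
  Submodule.span_le.mpr fun _ ⟨u, v, h⟩ => h ▸ commutator_mem_commutatorSpan u v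

end

theorem IsSimpleModule.lsmul_surjective_of_isAlgClosed (K R V : Type*) [Field K] [IsAlgClosed K]
    [Ring R] [Algebra K R] [AddCommGroup V] [Module K V] [Module R V] [IsScalarTower K R V]
    [IsSimpleModule R V] [FiniteDimensional K V] :
    Function.Surjective (Algebra.lsmul K K V : R →ₐ[K] Module.End K V) := by
  intro f
  have hscalar := (IsSimpleModule.algebraMap_end_bijective_of_isAlgClosed (A := R) (V := V) K).2
  let f' : Module.End (Module.End R V) V :=
    { toFun := f
      map_add' := f.map_add
      map_smul' := fun g v => by
        obtain ⟨c, rfl⟩ := hscalar g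
        simp }
  have : Module.Finite (Module.End R V) V := Module.Finite.of_restrictScalars_finite K _ V
  obtain ⟨r, hr⟩ := Module.Finite.toModuleEnd_moduleEnd_surjective f'
  exact ⟨r, LinearMap.ext fun v => congr($hr v)⟩

lemma LinearMap.exists_trace_ne_zero (K V : Type*) [Field K] [AddCommGroup V] [Module K V]
    [FiniteDimensional K V] [Nontrivial V] : ∃ f : Module.End K V, LinearMap.trace K V f ≠ 0 := by
  obtain ⟨v, hv⟩ := exists_ne (0 : V)
  obtain ⟨φ, hφ⟩ : ∃ φ : Module.Dual K V, φ v ≠ 0 := by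
    by_contra! h
    exact hv ((Module.forall_dual_apply_eq_zero_iff K v).mp h)
  exact ⟨φ.smulRight v, by simpa using hφ⟩

theorem commutatorSpan_ne_top_of_isAlgClosed (K C : Type*) [Field K] [IsAlgClosed K] [Ring C]
    [Algebra K C] [FiniteDimensional K C] [Nontrivial C] : commutatorSpan K C ≠ ⊤ := by
  obtain ⟨J, hJ⟩ := Ideal.exists_maximal C
  have : IsSimpleModule C (C ⧸ J) := isSimpleModule_iff_isCoatom.mpr hJ.out
  have : Nontrivial (C ⧸ J) := IsSimpleModule.nontrivial C _
  let ρ : C →ₐ[K] Module.End K (C ⧸ J) := Algebra.lsmul K K (C ⧸ J)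
  obtain ⟨f, hf⟩ := LinearMap.exists_trace_ne_zero K (C ⧸ J)
  obtain ⟨c, rfl⟩ := IsSimpleModule.lsmul_surjective_of_isAlgClosed K C (C ⧸ J) f
  intro htop
  have hker := commutatorSpan_le_ker ((LinearMap.trace K _).comp ρ.toLinearMap) fun u v => by
    simp only [LinearMap.comp_apply, AlgHom.toLinearMap_apply, map_mul]
    exact LinearMap.trace_mul_comm K _ _
  exact hf (hker (htop ▸ Submodule.mem_top : c ∈ commutatorSpan K C))

theorem commutatorSpan_ne_top (F B : Type*) [Field F] [Ring B] [Algebra F B]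
    [FiniteDimensional F B] [Nontrivial B] : commutatorSpan F B ≠ ⊤ := by
  intro htop
  let K := AlgebraicClosure F
  apply commutatorSpan_ne_top_of_isAlgClosed K (K ⊗[F] B)
  rw [eq_top_iff, ← Submodule.baseChange_top, ← htop, Submodule.baseChange_eq_span,
    Submodule.span_le]
  exact (map_commutatorSpan_le (Algebra.TensorProduct.includeRight : B →ₐ[F] K ⊗[F] B)).trans
    (commutatorSpan_le_restrictScalars K)

section

variable {F A : Type*} [Field F] [Ring A] [Algebra F A]

variable (F) in
def TwoSidedIdeal.supCommutatorSpan (I : TwoSidedIdeal A) : Submodule F A :=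
  I.asIdeal.restrictScalars F ⊔ commutatorSpan F A

lemma TwoSidedIdeal.mem_supCommutatorSpan_of_mem {I : TwoSidedIdeal A} {a : A} (ha : a ∈ I) :
    a ∈ I.supCommutatorSpan F :=
  Submodule.mem_sup_left (TwoSidedIdeal.mem_asIdeal.mpr ha)

lemma TwoSidedIdeal.commutatorSpan_le_supCommutatorSpan (I : TwoSidedIdeal A) :
    commutatorSpan F A ≤ I.supCommutatorSpan F :=
  le_sup_right

lemma TwoSidedIdeal.mem_supCommutatorSpan_of_sub_mem {I : TwoSidedIdeal A} {a m : A}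
    (ha : a - m ∈ commutatorSpan F A) (hm : m ∈ I) : a ∈ I.supCommutatorSpan F :=
  sub_add_cancel a m ▸ Submodule.add_mem _
    (I.commutatorSpan_le_supCommutatorSpan ha) (mem_supCommutatorSpan_of_mem hm)

theorem TwoSidedIdeal.supCommutatorSpan_ne_top [FiniteDimensional F A] {I : TwoSidedIdeal A}
    (hI : I ≠ ⊤) : I.supCommutatorSpan F ≠ ⊤ := by
  let π : A →ₐ[F] I.ringCon.Quotient := RingCon.mkₐ F I.ringCon
  have hπ : Function.Surjective π := I.ringCon.mkₐ_surjective
  have : FiniteDimensional F I.ringCon.Quotient := Module.Finite.of_surjective π.toLinearMap hπ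
  have : Nontrivial I.ringCon.Quotient :=
    ⟨⟨π 1, π 0, fun h => hI (I.one_mem_iff.mp ((I.mem_iff 1).mpr ((RingCon.eq _).mp h)))⟩⟩
  intro htop
  apply commutatorSpan_ne_top F I.ringCon.Quotient
  have hle : I.supCommutatorSpan F ≤ (commutatorSpan F _).comap π.toLinearMap := by
    refine sup_le (fun a ha => ?_) (Submodule.map_le_iff_le_comap.mp (map_commutatorSpan_le π))
    have : π a = 0 := (RingCon.eq _).mpr ((I.mem_iff a).mp (mem_asIdeal.mp ha))
    simp [this]
  rw [eq_top_iff]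
  rintro b -
  obtain ⟨a, rfl⟩ := hπ b
  exact hle (htop ▸ Submodule.mem_top)

def Submodule.twoSidedCore (U : Submodule F A) (hU : commutatorSpan F A ≤ U) :
    TwoSidedIdeal A :=
  .mk' {a | ∀ b, a * b ∈ U} (fun b => by simp)
    (fun ha hb c => by simpa only [add_mul] using U.add_mem (ha c) (hb c))
    (fun ha c => by simpa only [neg_mul] using U.neg_mem (ha c))
    (fun {c a} ha b => by
      rw [show c * a * b = (c * (a * b) - a * b * c) + a * (b * c) by noncomm_ring]
      exact U.add_mem (hU (commutator_mem_commutatorSpan _ _)) (ha _))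
    (fun {a c} ha b => by simpa only [mul_assoc] using ha (c * b))

lemma Submodule.mem_twoSidedCore {U : Submodule F A} {hU : commutatorSpan F A ≤ U} {a : A} :
    a ∈ U.twoSidedCore hU ↔ ∀ b, a * b ∈ U :=
  TwoSidedIdeal.mem_mk' ..

variable (F) in
theorem IsCoatom.mem_iff_forall_mul_mem_supCommutatorSpan [FiniteDimensional F A]
    {M : TwoSidedIdeal A} (hM : IsCoatom M) {a : A} :
    a ∈ M ↔ ∀ b, a * b ∈ M.supCommutatorSpan F := by
  set N := (M.supCommutatorSpan F).twoSidedCore M.commutatorSpan_le_supCommutatorSpan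
  have hMN : M ≤ N := fun a ha => Submodule.mem_twoSidedCore.mpr fun b =>
    TwoSidedIdeal.mem_supCommutatorSpan_of_mem (M.mul_mem_right a b ha)
  have hN : N ≠ ⊤ := fun h => TwoSidedIdeal.supCommutatorSpan_ne_top hM.1 <| eq_top_iff.mpr
    fun b _ => by simpa using Submodule.mem_twoSidedCore.mp (by rw [h]; trivial : (1 : A) ∈ N) b
  exact (SetLike.ext_iff.mp ((hM.le_iff.mp hMN).resolve_left hN) a).symm.trans
    Submodule.mem_twoSidedCore

theorem Submodule.exists_sub_mem_of_comap_le {V : Type*} [AddCommGroup V] [Module F V]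
    [FiniteDimensional F V] {f : V →ₗ[F] V} {p : Submodule F V} (hf : p.comap f ≤ p) (v : V) :
    ∃ w, v - f w ∈ p := by
  have hker : LinearMap.ker (p.mkQ ∘ₗ f) = p.comap f := by
    rw [LinearMap.ker_comp, Submodule.ker_mkQ]
  have hrange : LinearMap.range (p.mkQ ∘ₗ f) = ⊤ := by
    apply Submodule.eq_top_of_finrank_eq
    have h1 := LinearMap.finrank_range_add_finrank_ker (p.mkQ ∘ₗ f)
    have h2 := p.finrank_quotient_add_finrank
    have h3 := Submodule.finrank_mono hf
    have h4 := Submodule.finrank_le (LinearMap.range (p.mkQ ∘ₗ f))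
    rw [hker] at h1
    omega
  obtain ⟨w, hw⟩ := hrange ▸ Submodule.mem_top (x := p.mkQ v)
  exact ⟨w, (Submodule.Quotient.eq p).mp hw.symm⟩

end

section Polarization

variable {F A : Type*} [Field F] [Ring A] [Algebra F A] {T : A →ₗ[F] A}

lemma map_mul_self_sub_mem_commutatorSpan (hT : ∀ x, T x ^ 3 - x ^ 3 ∈ commutatorSpan F A)
    (h6 : (6 : F) ≠ 0) (hT1 : T 1 = 1) (y : A) :
    T y * T y - y * y ∈ commutatorSpan F A := by
  have key : (6 : F) • (T y * T y - y * y) =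
      (T (y + 1) ^ 3 - (y + 1) ^ 3) - (T (y - 1) ^ 3 - (y - 1) ^ 3) := by
    rw [map_add, map_sub, hT1, Algebra.smul_def, map_ofNat]
    noncomm_ring
  rw [← Submodule.smul_mem_iff _ h6, key]
  exact sub_mem (hT _) (hT _)

lemma map_mul_map_sub_mul_mem_commutatorSpan (hT : ∀ x, T x ^ 3 - x ^ 3 ∈ commutatorSpan F A)
    (h2 : (2 : F) ≠ 0) (h3 : (3 : F) ≠ 0)
    (hT1 : T 1 = 1) (x y : A) : T x * T y - x * y ∈ commutatorSpan F A := by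
  have h6 : (6 : F) ≠ 0 := by
    simpa [show (6 : F) = 2 * 3 by norm_num] using mul_ne_zero h2 h3
  have sq := map_mul_self_sub_mem_commutatorSpan hT h6 hT1
  have key : (2 : F) • (T x * T y - x * y) =
      ((T (x + y) * T (x + y) - (x + y) * (x + y)) - (T x * T x - x * x) - (T y * T y - y * y))
        + (T x * T y - T y * T x) - (x * y - y * x) := by
    rw [map_add, Algebra.smul_def, map_ofNat]
    noncomm_ring
  rw [← Submodule.smul_mem_iff _ h2, key]
  exact sub_mem (add_mem (sub_mem (sub_mem (sq _) (sq x)) (sq y))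
    (commutator_mem_commutatorSpan _ _)) (commutator_mem_commutatorSpan _ _)

lemma map_mul_map_mul_map_sub_mem_commutatorSpan (hT : ∀ x, T x ^ 3 - x ^ 3 ∈ commutatorSpan F A)
    (h2 : (2 : F) ≠ 0) (h3 : (3 : F) ≠ 0)
    (x y : A) : T y * T y * T x - y * y * x ∈ commutatorSpan F A := by
  have sym : (2 : F) • (T x * T y * T y + T y * T x * T y + T y * T y * T x
      - (x * y * y + y * x * y + y * y * x)) ∈ commutatorSpan F A := by
    have key : (2 : F) • (T x * T y * T y + T y * T x * T y + T y * T y * T x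
        - (x * y * y + y * x * y + y * y * x)) =
        (T (x + y) ^ 3 - (x + y) ^ 3) + (T (x - y) ^ 3 - (x - y) ^ 3)
          - (2 : F) • (T x ^ 3 - x ^ 3) := by
      simp only [map_add, map_sub, Algebra.smul_def, map_ofNat]
      noncomm_ring
    rw [key]
    exact sub_mem (add_mem (hT _) (hT _)) (Submodule.smul_mem _ _ (hT x))
  -- cyclically rotating the monomials `x y y` and `y x y` into `y y x` costs only commutators
  have key : (3 : F) • (T y * T y * T x - y * y * x) =
      (T x * T y * T y + T y * T x * T y + T y * T y * T x - (x * y * y + y * x * y + y * y * x))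
        - (T x * T y * T y - T y * (T x * T y)) - (2 : F) • (T y * T x * T y - T y * (T y * T x))
        + (x * y * y - y * (x * y)) + (2 : F) • (y * x * y - y * (y * x)) := by
    simp only [Algebra.smul_def, map_ofNat]
    noncomm_ring
  rw [← Submodule.smul_mem_iff _ h3, key]
  have comm := commutator_mem_commutatorSpan (F := F) (A := A)
  exact add_mem (add_mem (sub_mem (sub_mem ((Submodule.smul_mem_iff _ h2).mp sym) (comm _ _))
    (Submodule.smul_mem _ _ (comm _ _))) (comm _ _)) (Submodule.smul_mem _ _ (comm _ _))

end Polarization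

/-- **Corollary 3.7 (second part).** Let `A` be a unital finite-dimensional algebra over a
field `F` with `char F ≠ 2, 3`. If a linear map `T : A → A` satisfies `T 1 = 1` and
`T x ^ 3 - x ^ 3 ∈ [A,A]` for every `x ∈ A`, then `T (x ^ 2) - T x ^ 2 ∈ rad A` for
every `x ∈ A`. -/
theorem square_diff_mem_radical (F A : Type*) [Field F] [Ring A] [Algebra F A]
    [FiniteDimensional F A] (h2 : (2 : F) ≠ 0) (h3 : (3 : F) ≠ 0) (T : A →ₗ[F] A)
    (hT1 : T 1 = 1)
    (hT : ∀ x : A, T x ^ 3 - x ^ 3 ∈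
      Submodule.span F {z : A | ∃ u v : A, z = u * v - v * u}) :
    ∀ x : A, T (x ^ 2) - T x ^ 2 ∈ ringRad A := by
  intro x
  have hprod := map_mul_map_sub_mul_mem_commutatorSpan hT h2 h3 hT1
  have htriple := map_mul_map_mul_map_sub_mem_commutatorSpan hT h2 h3
  rw [ringRad, TwoSidedIdeal.mem_sInf]
  intro M (hM : IsCoatom M)
  have hpre : (M.asIdeal.restrictScalars F).comap T ≤ M.asIdeal.restrictScalars F := fun a ha =>
    TwoSidedIdeal.mem_asIdeal.mpr <| (hM.mem_iff_forall_mul_mem_supCommutatorSpan F).mpr fun b =>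
      TwoSidedIdeal.mem_supCommutatorSpan_of_sub_mem (by simpa using neg_mem (hprod a b))
        (M.mul_mem_right _ (T b) (TwoSidedIdeal.mem_asIdeal.mp ha))
  rw [hM.mem_iff_forall_mul_mem_supCommutatorSpan F]
  intro b
  obtain ⟨a, ha⟩ := Submodule.exists_sub_mem_of_comap_le hpre b
  have hcomm : (T (x ^ 2) - T x ^ 2) * T a ∈ commutatorSpan F A := by
    simpa [sq, sub_mul] using sub_mem (hprod (x * x) a) (htriple a x)
  refine TwoSidedIdeal.mem_supCommutatorSpan_of_sub_mem ?_
    (M.mul_mem_left (T (x ^ 2) - T x ^ 2) _ (TwoSidedIdeal.mem_asIdeal.mp ha))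
  rwa [mul_sub, sub_sub_cancel]
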